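/- arXiv:1402.1875 — 2 statements merged into one kernel-verified Lean document; each statement's English description precedes it below -/
import Mathlib

section
/- Let X be a metric space, A ⊆ X a subset, K a metric ANR, and f : X → K a continuous map such that the restriction of f to A is nullhomotopic. Then there exists a set U open in X with A ⊆ U such that the restriction of f to U is nullhomotopic. -/
universe u

/-- A metrizable topological space `K` is a *metric ANR* if for every metrizable space `Z`
and every closed embedding `e : K → Z`, some open neighborhood of the image of `e` in `Z`
retracts onto the image of `e`. -/
def IsMetricANR (K : Type u) [TopologicalSpace K] : Prop :=
  TopologicalSpace.MetrizableSpace K ∧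
  ∀ (Z : Type u) [TopologicalSpace Z], TopologicalSpace.MetrizableSpace Z →
    ∀ e : K → Z, Topology.IsClosedEmbedding e →
      ∃ (U : Set Z), IsOpen U ∧ Set.range e ⊆ U ∧
        ∃ r : C(U, Z), (∀ u : U, r u ∈ Set.range e) ∧
          ∀ (k : K) (h : e k ∈ U), r ⟨e k, h⟩ = e k

/-!
Give `K` a compatible metric and embed it in the Banach space `K →ᵇ ℝ` by
`e k = min (dist k ·) 1`. The image is closed in its convex hull `C`: a point of `C` dominates a
positive multiple of some `e k`, and since `e ζ` vanishes at `ζ`, this forces every limit of points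
`e ζ` lying in `C` to be `e k`. The ANR property then gives an open `O ⊇ e K` and a retraction
`C ∩ O → K`, so it suffices to spread the nullhomotopy `e ∘ H` of `e ∘ f|A`, which runs in
`C ∩ O`, to a neighbourhood of `A` without leaving `C ∩ O`.

For this, fix around each path `t ↦ e (H (t, a))` a tube of radius `ε a` inside `O`, and a radius
`δ a` within which the nearby paths, and `e ∘ f`, stay `ε a`-close to it. On the union `U` of the
balls `B(a, min (δ a) 1 / 3)`, a partition of unity averages the paths of the centres of the
balls containing `u`. These centres all lie `δ`-close to one of almost maximal radius, so the
average and the segment from `e (f u)` to its starting point stay in that centre's tube.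
-/

open Set Metric Topology ContinuousMap
open scoped BoundedContinuousFunction unitInterval

theorem exists_mem_forall_lt_two_mul {ι : Type*} {S : Set ι} (hS : S.Nonempty) {η : ι → ℝ}
    (hη : ∀ i ∈ S, 0 < η i) (hbdd : BddAbove (η '' S)) : ∃ i₀ ∈ S, ∀ i ∈ S, η i < 2 * η i₀ := by
  obtain ⟨i, hi⟩ := hS
  have hsup : 0 < sSup (η '' S) := (hη i hi).trans_le (le_csSup hbdd ⟨i, hi, rfl⟩)
  obtain ⟨_, ⟨i₀, hi₀, rfl⟩, hlt⟩ :=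
    exists_lt_of_lt_csSup (Set.Nonempty.image η ⟨i, hi⟩) (half_lt_self hsup)
  exact ⟨i₀, hi₀, fun j hj => by linarith [le_csSup hbdd ⟨j, hj, rfl⟩]⟩

theorem exists_forall_dist_lt_three_mul {ι X : Type*} [PseudoMetricSpace X] (p : ι → X)
    {η : ι → ℝ} (hη : ∀ i, 0 < η i) (hη1 : ∀ i, η i ≤ 1) {x : X} (hx : ∃ i, dist x (p i) < η i) :
    ∃ i₀, dist x (p i₀) < η i₀ ∧ ∀ i, dist x (p i) < η i → dist (p i) (p i₀) < 3 * η i₀ := by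
  obtain ⟨i₀, hi₀, hmax⟩ := exists_mem_forall_lt_two_mul (S := {i | dist x (p i) < η i}) hx
    (fun i _ => hη i) ⟨1, by rintro _ ⟨i, -, rfl⟩; exact hη1 i⟩
  refine ⟨i₀, hi₀, fun i hi => ?_⟩
  calc dist (p i) (p i₀) ≤ dist x (p i) + dist x (p i₀) := dist_triangle_left _ _ _
    _ < 3 * η i₀ := by linarith [hmax i hi, show dist x (p i₀) < η i₀ from hi₀]

theorem Continuous.exists_pos_forall_closedBall_subset {Y Z : Type*} [TopologicalSpace Y]
    [CompactSpace Y] [PseudoMetricSpace Z] {γ : Y → Z} (hγ : Continuous γ) {O : Set Z}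
    (hO : IsOpen O) (hγO : ∀ y, γ y ∈ O) : ∃ ε > 0, ∀ y, closedBall (γ y) ε ⊆ O := by
  obtain ⟨ε, hε, hsub⟩ :=
    (isCompact_range hγ).exists_cthickening_subset_open hO (range_subset_iff.2 hγO)
  exact ⟨ε, hε, fun y => (closedBall_subset_cthickening (mem_range_self y) ε).trans hsub⟩

theorem ContinuousMap.exists_forall_dist_lt {Y A Z : Type*} [TopologicalSpace Y] [CompactSpace Y]
    [PseudoMetricSpace A] [PseudoMetricSpace Z] (F : C(Y × A, Z)) (a : A) {ε : ℝ} (hε : 0 < ε) :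
    ∃ δ > 0, ∀ a', dist a' a < δ → ∀ y, dist (F (y, a')) (F (y, a)) < ε := by
  obtain ⟨v, hv, hvF⟩ := isCompact_univ.mem_uniformity_of_prod (f := fun a y => F (y, a))
    (s := univ) (by fun_prop) (mem_univ a) (dist_mem_uniformity hε)
  obtain ⟨δ, hδ, hball⟩ := Metric.mem_nhds_iff.1 (nhdsWithin_univ a ▸ hv)
  exact ⟨δ, hδ, fun a' ha' y => hvF a' (hball ha') y (mem_univ y)⟩

section TopologicalVectorSpace

variable {Y E : Type*} [TopologicalSpace Y] [AddCommGroup E] [TopologicalSpace E]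
  [IsTopologicalAddGroup E] [Module ℝ E] [ContinuousSMul ℝ E] {S : Set E}

theorem homotopicWith_of_segment_subset {f₀ f₁ : C(Y, E)}
    (h : ∀ y, segment ℝ (f₀ y) (f₁ y) ⊆ S) : f₀.HomotopicWith f₁ fun f => ∀ y, f y ∈ S :=
  ⟨⟨.affine f₀ f₁, fun t y => h y <| Path.range_segment (f₀ y) (f₁ y) ▸ mem_range_self t⟩⟩

theorem homotopicWith_const_of_segment_subset {g : C(Y, E)} {c : E} (Φ : C(I × Y, E))
    (hΦ1 : ∀ y, Φ (1, y) = c) (hΦS : ∀ p, Φ p ∈ S) (hseg : ∀ y, segment ℝ (g y) (Φ (0, y)) ⊆ S) :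
    g.HomotopicWith (.const Y c) fun f => ∀ y, f y ∈ S :=
  (homotopicWith_of_segment_subset (f₁ := ⟨fun y => Φ (0, y), by fun_prop⟩) hseg).trans
    ⟨⟨⟨Φ, fun _ => rfl, hΦ1⟩, fun t y => hΦS (t, y)⟩⟩

end TopologicalVectorSpace

theorem exists_continuous_forall_mem_convexHull_image {T X E : Type*} [PseudoMetricSpace T]
    [PseudoMetricSpace X] [AddCommGroup E] [TopologicalSpace E] [Module ℝ E] [ContinuousAdd E]
    [ContinuousSMul ℝ E] {A : Set X} (H : C(T × A, E)) (η : A → ℝ) :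
    ∃ Φ : C(T × ↥(⋃ a : A, ball (a : X) (η a)), E), ∀ p,
      Φ p ∈ convexHull ℝ ((fun a => H (p.1, a)) '' {a | dist (p.2 : X) a < η a}) := by
  refine exists_continuous_forall_mem_convex_of_local (fun _ => convex_convexHull ℝ _) fun p => ?_
  obtain ⟨a, ha⟩ := mem_iUnion.1 p.2.2
  refine ⟨univ ×ˢ (Subtype.val ⁻¹' ball (a : X) (η a)),
    prod_mem_nhds Filter.univ_mem ((isOpen_ball.preimage continuous_subtype_val).mem_nhds ha),
    fun q => H (q.1, a), by fun_prop, fun q hq => subset_convexHull ℝ _ ⟨a, hq.2, rfl⟩⟩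

section NormedSpace

variable {E : Type*} [NormedAddCommGroup E] [NormedSpace ℝ E]

theorem exists_isOpen_homotopicWith_restrict {X : Type*} [PseudoMetricSpace X] {A : Set X}
    {C O : Set E} (hC : Convex ℝ C) (hO : IsOpen O) {g : C(X, E)} (hg : ∀ x, g x ∈ C) {c : E}
    (hA : (g.restrict A).HomotopicWith (.const A c) fun h => ∀ a, h a ∈ C ∩ O) :
    ∃ U, IsOpen U ∧ A ⊆ U ∧
      (g.restrict U).HomotopicWith (.const U c) fun h => ∀ u, h u ∈ C ∩ O := by
  obtain ⟨H⟩ := hA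
  choose ε hε hεO using fun a : A => (show Continuous fun t => H (t, a) by fun_prop
    ).exists_pos_forall_closedBall_subset hO fun t => (H.prop t a).2
  have hδ : ∀ a : A, ∃ δ > 0, (∀ a' : A, dist a' a < δ → ∀ t, dist (H (t, a')) (H (t, a)) < ε a)
      ∧ ∀ x : X, dist x a < δ → dist (g x) (g a) < ε a := by
    intro a
    obtain ⟨δ₁, hδ₁, hH⟩ := H.toContinuousMap.exists_forall_dist_lt a (hε a)
    obtain ⟨δ₂, hδ₂, hg⟩ := Metric.continuous_iff.1 g.continuous a (ε a) (hε a)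
    exact ⟨min δ₁ δ₂, lt_min hδ₁ hδ₂, fun a' ha' => hH a' (ha'.trans_le (min_le_left _ _)),
      fun x hx => hg x (hx.trans_le (min_le_right _ _))⟩
  choose δ hδ hδH hδg using hδ
  -- capping the radii at `1` guarantees a centre of almost maximal radius near each point
  set η : A → ℝ := fun a => min (δ a) 1 / 3
  have hη : ∀ a, 0 < η a := fun a => div_pos (lt_min (hδ a) one_pos) three_pos
  refine ⟨⋃ a : A, ball (a : X) (η a), isOpen_iUnion fun _ => isOpen_ball,
    fun x hx => mem_iUnion.2 ⟨⟨x, hx⟩, mem_ball_self (hη _)⟩, ?_⟩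
  obtain ⟨Φ, hΦ⟩ := exists_continuous_forall_mem_convexHull_image H.toContinuousMap η
  have hΦ1 : ∀ u, Φ (1, u) = c := by
    intro u
    refine convexHull_min ?_ (convex_singleton c) (hΦ (1, u))
    rintro _ ⟨a, -, rfl⟩
    exact H.apply_one a
  have hnear : ∀ u : ↥(⋃ a : A, ball (a : X) (η a)), ∃ a₀ : A,
      g u ∈ closedBall (H (0, a₀)) (ε a₀) ∩ C ∧
        ∀ t, Φ (t, u) ∈ closedBall (H (t, a₀)) (ε a₀) ∩ C := by
    intro u
    obtain ⟨a₀, hu, hnear⟩ := exists_forall_dist_lt_three_mul (Subtype.val : A → X) hη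
      (fun a => by simp only [η]; linarith [min_le_right (δ a) 1]) (mem_iUnion.1 u.2)
    have hηδ : 3 * η a₀ ≤ δ a₀ := by simp only [η]; linarith [min_le_left (δ a₀) 1]
    refine ⟨a₀, ⟨?_, hg u⟩, fun t => convexHull_min ?_ ((convex_closedBall _ _).inter hC) (hΦ _)⟩
    · rw [H.apply_zero, mem_closedBall]
      exact (hδg a₀ u (by linarith [hη a₀])).le
    · rintro _ ⟨a, ha, rfl⟩
      exact ⟨mem_closedBall.2 (hδH a₀ a ((hnear a ha).trans_le hηδ) t).le, (H.prop t a).1⟩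
  have hsub : ∀ t a₀, closedBall (H (t, a₀)) (ε a₀) ∩ C ⊆ C ∩ O :=
    fun t a₀ z hz => ⟨hz.2, hεO a₀ t hz.1⟩
  refine homotopicWith_const_of_segment_subset Φ hΦ1 (fun ⟨t, u⟩ => ?_) fun u => ?_
  · obtain ⟨a₀, -, hΦ₀⟩ := hnear u
    exact hsub t a₀ (hΦ₀ t)
  · obtain ⟨a₀, hg₀, hΦ₀⟩ := hnear u
    exact (((convex_closedBall _ _).inter hC).segment_subset hg₀ (hΦ₀ 0)).trans (hsub 0 a₀)

theorem exists_isOpen_nullhomotopic_restrict_of_retract {X K : Type*} [PseudoMetricSpace X]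
    [TopologicalSpace K] {A : Set X} {C O : Set E} (hC : Convex ℝ C) (hO : IsOpen O)
    (e : C(K, E)) (he : ∀ k, e k ∈ C ∩ O)
    (r : C(↥(C ∩ O), K)) (hr : ∀ k, r ⟨e k, he k⟩ = k) {f : C(X, K)}
    (hf : (f.restrict A).Nullhomotopic) :
    ∃ U, IsOpen U ∧ A ⊆ U ∧ (f.restrict U).Nullhomotopic := by
  obtain ⟨y, ⟨F⟩⟩ := hf
  have hA : ((e.comp f).restrict A).HomotopicWith (.const A (e y)) fun h => ∀ a, h a ∈ C ∩ O :=
    ⟨⟨⟨⟨fun p => e (F p), by fun_prop⟩, fun a => by simp, fun a => by simp⟩, fun t a => he _⟩⟩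
  obtain ⟨U, hU, hAU, ⟨G⟩⟩ :=
    exists_isOpen_homotopicWith_restrict hC hO (fun x => (he (f x)).1) hA
  refine ⟨U, hU, hAU, y,
    ⟨⟨⟨fun p => r ⟨G p, G.prop p.1 p.2⟩, by fun_prop⟩, fun u => ?_, fun u => ?_⟩⟩⟩ <;> simp [hr]

end NormedSpace

section TruncDist

variable {K : Type*}

theorem min_dist_one_mem_Icc [PseudoMetricSpace K] (k x : K) : min (dist k x) 1 ∈ Icc (0 : ℝ) 1 :=
  ⟨le_min dist_nonneg zero_le_one, min_le_right _ _⟩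

noncomputable def truncDistEmbedding (K : Type*) [PseudoMetricSpace K] (k : K) : K →ᵇ ℝ :=
  .mkOfBound ⟨fun x => min (dist k x) 1, by fun_prop⟩ 1 fun x y =>
    Real.dist_le_of_mem_Icc_01 (min_dist_one_mem_Icc k x) (min_dist_one_mem_Icc k y)

@[simp]
theorem truncDistEmbedding_apply [PseudoMetricSpace K] (k x : K) :
    truncDistEmbedding K k x = min (dist k x) 1 := rfl

theorem dist_truncDistEmbedding [PseudoMetricSpace K] (k k' : K) :
    dist (truncDistEmbedding K k) (truncDistEmbedding K k') = min (dist k k') 1 := by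
  refine le_antisymm ((BoundedContinuousFunction.dist_le (by positivity)).2 fun x => ?_) ?_
  · simp only [truncDistEmbedding_apply, Real.dist_eq]
    refine le_min ?_ (Real.dist_le_of_mem_Icc_01 (min_dist_one_mem_Icc k x)
      (min_dist_one_mem_Icc k' x))
    refine (abs_min_sub_min_le_max _ _ _ _).trans ?_
    simpa using abs_dist_sub_le k k' x
  · have := BoundedContinuousFunction.dist_coe_le_dist (f := truncDistEmbedding K k)
      (g := truncDistEmbedding K k') k'
    rwa [truncDistEmbedding_apply, truncDistEmbedding_apply, dist_self, min_eq_left zero_le_one,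
      Real.dist_eq, sub_zero, abs_of_nonneg (min_dist_one_mem_Icc k k').1] at this

theorem isUniformEmbedding_truncDistEmbedding [MetricSpace K] :
    IsUniformEmbedding (truncDistEmbedding K) := by
  refine Metric.isUniformEmbedding_iff'.2 ⟨fun ε hε => ⟨ε, hε, fun h => ?_⟩,
    fun δ hδ => ⟨min δ 1, lt_min hδ one_pos, fun h => ?_⟩⟩
  · rw [dist_truncDistEmbedding]
    exact (min_le_left _ _).trans_lt h
  · rw [dist_truncDistEmbedding] at h
    exact not_le.1 fun h' => h.not_ge (min_le_min_right 1 h')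

theorem exists_mul_truncDistEmbedding_le_of_mem_convexHull [PseudoMetricSpace K] {w : K →ᵇ ℝ}
    (hw : w ∈ convexHull ℝ (range (truncDistEmbedding K))) :
    ∃ k, ∃ c > 0, ∀ x, c * truncDistEmbedding K k x ≤ w x := by
  refine (convexHull_min (t := {v | (∀ x, 0 ≤ v x) ∧
    ∃ k, ∃ c > 0, ∀ x, c * truncDistEmbedding K k x ≤ v x}) ?_ ?_ hw).2
  · rintro _ ⟨k, rfl⟩
    exact ⟨fun x => (min_dist_one_mem_Icc k x).1, k, 1, one_pos, fun x => (one_mul _).le⟩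
  · rintro v₁ ⟨h₁, k₁, c₁, hc₁, hv₁⟩ v₂ ⟨h₂, k₂, c₂, hc₂, hv₂⟩ a b ha hb hab
    simp only [mem_ofPred_eq, BoundedContinuousFunction.coe_add,
      BoundedContinuousFunction.coe_smul, Pi.add_apply, smul_eq_mul]
    refine ⟨fun x => add_nonneg (mul_nonneg ha (h₁ x)) (mul_nonneg hb (h₂ x)), ?_⟩
    rcases ha.eq_or_lt with rfl | ha
    · refine ⟨k₂, c₂, hc₂, fun x => ?_⟩
      rw [zero_add] at hab
      simpa [hab] using hv₂ x
    · refine ⟨k₁, a * c₁, mul_pos ha hc₁, fun x => ?_⟩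
      nlinarith [hv₁ x, mul_nonneg hb (h₂ x)]

theorem closure_inter_convexHull_range_truncDistEmbedding_subset [MetricSpace K] :
    closure (range (truncDistEmbedding K)) ∩ convexHull ℝ (range (truncDistEmbedding K)) ⊆
      range (truncDistEmbedding K) := by
  set e := truncDistEmbedding K
  rintro w ⟨hw_closure, hw_hull⟩
  obtain ⟨k, c, hc, hkw⟩ := exists_mul_truncDistEmbedding_le_of_mem_convexHull hw_hull
  have hclose : ∀ ζ, dist w (e k) ≤ (1 + c⁻¹) * dist w (e ζ) := by
    intro ζ
    have hwζ : w ζ ≤ dist w (e ζ) := by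
      simpa [e, Real.dist_eq] using
        (le_abs_self _).trans (BoundedContinuousFunction.dist_coe_le_dist (f := w) (g := e ζ) ζ)
    have hkζ : e k ζ ≤ c⁻¹ * w ζ := by
      rw [inv_mul_eq_div, le_div_iff₀ hc, mul_comm]
      exact hkw ζ
    calc dist w (e k) ≤ dist w (e ζ) + dist (e ζ) (e k) := dist_triangle _ _ _
      _ = dist w (e ζ) + e k ζ := by rw [dist_truncDistEmbedding, dist_comm ζ k]; rfl
      _ ≤ (1 + c⁻¹) * dist w (e ζ) := by nlinarith [inv_pos.2 hc]
  refine ⟨k, (eq_of_forall_dist_le fun ε hε => ?_).symm⟩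
  obtain ⟨ζ, hζ⟩ := mem_closure_range_iff.1 hw_closure (ε / (1 + c⁻¹)) (by positivity)
  calc dist w (e k) ≤ (1 + c⁻¹) * dist w (e ζ) := hclose ζ
    _ ≤ ε := by
      rw [lt_div_iff₀ (by positivity)] at hζ
      linarith

theorem isClosedEmbedding_codRestrict_truncDistEmbedding [MetricSpace K] :
    IsClosedEmbedding (codRestrict (truncDistEmbedding K)
      (convexHull ℝ (range (truncDistEmbedding K))) fun k => subset_convexHull ℝ _ ⟨k, rfl⟩) := by
  refine ⟨isUniformEmbedding_truncDistEmbedding.isEmbedding.codRestrict _ _,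
    isClosed_induced_iff.2 ⟨closure (range (truncDistEmbedding K)), isClosed_closure, ?_⟩⟩
  ext w
  refine ⟨fun hw => ?_, ?_⟩
  · obtain ⟨k, hk⟩ := closure_inter_convexHull_range_truncDistEmbedding_subset ⟨hw, w.2⟩
    exact ⟨k, Subtype.ext hk⟩
  · rintro ⟨k, rfl⟩
    exact subset_closure ⟨k, rfl⟩

end TruncDist

theorem IsMetricANR.exists_retraction {K : Type u} [MetricSpace K] (hK : IsMetricANR K) :
    ∃ O : Set (K →ᵇ ℝ), IsOpen O ∧ range (truncDistEmbedding K) ⊆ O ∧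
      ∃ r : C(↥(convexHull ℝ (range (truncDistEmbedding K)) ∩ O), K),
        ∀ k hk, r ⟨truncDistEmbedding K k, hk⟩ = k := by
  have he := isClosedEmbedding_codRestrict_truncDistEmbedding (K := K)
  obtain ⟨V, hV, heV, r, hr_mem, hr⟩ := hK.2 _ inferInstance _ he
  obtain ⟨O, hO, rfl⟩ := isOpen_induced_iff.1 hV
  refine ⟨O, hO, range_subset_iff.2 fun k => heV ⟨k, rfl⟩, ⟨fun w =>
    he.toHomeomorph.symm ⟨r ⟨⟨w, w.2.1⟩, w.2.2⟩, hr_mem _⟩, by fun_prop⟩, fun k hk => ?_⟩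
  exact (congrArg he.toHomeomorph.symm (Subtype.ext (hr k hk.2))).trans
    (he.toHomeomorph_symm_apply k)

/-- If `X` is a metric space, `A ⊆ X`, `K` a metric ANR and `f : X → K` a
continuous map whose restriction to `A` is nullhomotopic, then there is an open set `U ⊇ A`
such that the restriction of `f` to `U` is nullhomotopic. -/
theorem nullhomotopic_extends_to_open {X : Type u} [MetricSpace X] (A : Set X)
    {K : Type u} [TopologicalSpace K] (hK : IsMetricANR K)
    (f : C(X, K)) (hf : (f.restrict A).Nullhomotopic) :
    ∃ U : Set X, IsOpen U ∧ A ⊆ U ∧ (f.restrict U).Nullhomotopic := by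
  have := hK.1
  let : MetricSpace K := TopologicalSpace.metrizableSpaceMetric K
  obtain ⟨O, hO, heO, r, hr⟩ := hK.exists_retraction
  exact exists_isOpen_nullhomotopic_restrict_of_retract (convex_convexHull ℝ _) hO
    ⟨truncDistEmbedding K, isUniformEmbedding_truncDistEmbedding.isEmbedding.continuous⟩
    (fun k => ⟨subset_convexHull ℝ _ (mem_range_self k), heO (mem_range_self k)⟩) r
    (fun k => hr k _) hf
end

section
/- Let K be a metric ANR and y₀ ∈ K. Then the path space PK = {φ ∈ C([0,1], K) : φ(1) = y₀}, equipped with the supremum metric D'(φ, ψ) = sup_{t∈[0,1]} d(φ(t), ψ(t)), is a metric ANR. -/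
universe u

/-!
Metric ANRs have the neighbourhood extension property: embed `K` isometrically into `K →ᵇ ℝ` by
Kuratowski's map, whose image is closed in its convex hull (Wojdysławski), extend a partial map
into the hull by Dugundji's theorem and retract back onto `K`. Given a closed embedding `e` of the
path space into `Z`, the map `(e φ, t) ↦ φ t`, together with `(z, 1) ↦ y₀`, is continuous on the
closed set `range e × I ∪ Z × {1}`, so it extends to a neighbourhood `V`. Since `I` is compact, `V`
contains a tube `U × I` around `range e`, and currying the extension over `U` retracts `U` onto
the path space.
-/

open Set Function Metric Topology TopologicalSpace BoundedContinuousFunction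

section Dugundji

variable {Y : Type*} [MetricSpace Y] {A : Set Y}

theorem exists_partitionOfUnity_compl_anchored (hA : IsClosed A) (hne : A.Nonempty) :
    ∃ (ρ : PartitionOfUnity (Aᶜ : Set Y) (Aᶜ : Set Y)) (a : (Aᶜ : Set Y) → Y), (∀ i, a i ∈ A) ∧
      ∀ i x, ρ i x ≠ 0 → ∀ p ∈ A, dist (a i) p ≤ 9 / 2 * dist (x : Y) p := by
  have hR : ∀ i : (Aᶜ : Set Y), 0 < infDist (i : Y) A := fun i =>
    (hA.notMem_iff_infDist_pos hne).1 i.2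
  obtain ⟨ρ, hρ⟩ := PartitionOfUnity.exists_isSubordinate isClosed_univ
    (fun i : (Aᶜ : Set Y) => Subtype.val ⁻¹' ball (i : Y) (infDist (i : Y) A / 3))
    (fun i => isOpen_ball.preimage continuous_subtype_val)
    (fun x _ => mem_iUnion.2 ⟨x, by simpa using hR x⟩)
  choose a ha hda using fun i : (Aᶜ : Set Y) =>
    (infDist_lt_iff hne).1 (by linarith [hR i] : infDist (i : Y) A < 2 * infDist (i : Y) A)
  refine ⟨ρ, a, ha, fun i x hx p hp => ?_⟩
  have hxi : dist (x : Y) i < infDist (i : Y) A / 3 := hρ i (subset_closure hx)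
  have hRi : infDist (i : Y) A ≤ infDist (x : Y) A + dist (x : Y) i := by
    rw [dist_comm]; exact infDist_le_infDist_add_dist
  have hxp : infDist (x : Y) A ≤ dist (x : Y) p := infDist_le_dist_of_mem hp
  calc dist (a i) p ≤ dist (a i) i + dist (i : Y) x + dist (x : Y) p := dist_triangle4 _ _ _ _
    _ ≤ 9 / 2 * dist (x : Y) p := by
      rw [dist_comm (a i) i, dist_comm (i : Y) x]; linarith [hda i]

theorem exists_continuous_extension_mem_convexHull {E : Type*} [NormedAddCommGroup E]
    [NormedSpace ℝ E] (hA : IsClosed A) (hne : A.Nonempty) {f : Y → E} (hf : ContinuousOn f A) :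
    ∃ F : Y → E, Continuous F ∧ EqOn F f A ∧ ∀ y, F y ∈ convexHull ℝ (f '' A) := by
  classical
  obtain ⟨ρ, a, ha, hρa⟩ := exists_partitionOfUnity_compl_anchored hA hne
  let F : Y → E := fun y => if hy : y ∈ A then f y else ∑ᶠ i, ρ i ⟨y, hy⟩ • f (a i)
  have hFA : EqOn F f A := fun y hy => dif_pos hy
  have hF_mem : ∀ y (hy : y ∉ A) {t : Set E}, Convex ℝ t →
      (∀ i, ρ i ⟨y, hy⟩ ≠ 0 → f (a i) ∈ t) → F y ∈ t := fun y hy t ht hat => by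
    simp only [F, dif_neg hy]
    exact ρ.finsum_smul_mem_convex (g := fun i _ => f (a i)) (mem_univ _) hat ht
  have hF_compl : ContinuousOn F Aᶜ := by
    rw [continuousOn_iff_continuous_domRestrict]
    convert ρ.continuous_finsum_smul (g := fun i _ => f (a i)) fun i _ _ => continuousAt_const
      using 2 with y
    exact dif_neg y.2
  -- off `A`, `F y` is a convex combination of values of `f` at points of `A` that are
  -- within `9/2 * dist y p` of `p`
  have hF_at : ∀ p ∈ A, ContinuousAt F p := by
    intro p hp
    rw [Metric.continuousAt_iff]
    intro ε hε
    obtain ⟨δ, hδ, hfδ⟩ := Metric.continuousWithinAt_iff.1 (hf p hp) (ε / 2) (half_pos hε)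
    refine ⟨δ / 5, by positivity, fun {y} hy => ?_⟩
    rw [hFA hp]
    by_cases hyA : y ∈ A
    · rw [hFA hyA]; exact (hfδ hyA (by linarith)).trans (half_lt_self hε)
    · refine lt_of_le_of_lt (mem_closedBall.1 <| hF_mem y hyA (convex_closedBall _ _)
        fun i hi => (hfδ (ha i) ?_).le) (half_lt_self hε)
      linarith [hρa i ⟨y, hyA⟩ hi p hp, dist_nonneg (x := y) (y := p)]
  refine ⟨F, ?_, hFA, fun y => ?_⟩
  · rw [← continuousOn_univ, ← compl_union_self A]
    exact hF_compl.union_continuousAt hA.isOpen_compl hF_at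
  · by_cases hy : y ∈ A
    · exact hFA hy ▸ subset_convexHull ℝ _ (mem_image_of_mem f hy)
    · exact hF_mem y hy (convex_convexHull ℝ _) fun i _ =>
        subset_convexHull ℝ _ (mem_image_of_mem f (ha i))

end Dugundji

section Kuratowski

variable {K : Type*} [MetricSpace K]

noncomputable def kuratowskiMap (x₀ x : K) : K →ᵇ ℝ :=
  .ofNormedAddCommGroup (fun y => dist x y - dist x₀ y) (by fun_prop) (dist x x₀) fun y =>
    (Real.norm_eq_abs _).trans_le (abs_dist_sub_le x x₀ y)

@[simp]
theorem kuratowskiMap_apply (x₀ x y : K) : kuratowskiMap x₀ x y = dist x y - dist x₀ y := rfl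

theorem isometry_kuratowskiMap (x₀ : K) : Isometry (kuratowskiMap x₀) :=
  Isometry.of_dist_eq fun x y => le_antisymm
    ((dist_le dist_nonneg).2 fun z => by simpa [Real.dist_eq] using abs_dist_sub_le x y z)
    (by simpa [Real.dist_eq] using
      dist_coe_le_dist (f := kuratowskiMap x₀ x) (g := kuratowskiMap x₀ y) y)

theorem mem_range_kuratowskiMap_of_mem_closure_of_mem_convexHull (x₀ : K) {g : K →ᵇ ℝ}
    (hcl : g ∈ closure (range (kuratowskiMap x₀)))
    (hg : g ∈ convexHull ℝ (range (kuratowskiMap x₀))) : g ∈ range (kuratowskiMap x₀) := by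
  set j := kuratowskiMap x₀
  rw [convexHull_eq_union_convexHull_finite_subsets, mem_iUnion₂] at hg
  obtain ⟨t, hts, hgt⟩ := hg
  -- the half-spaces `{h | infDist (j p) t ≤ h p + dist x₀ p}` contain `t`, hence its hull
  have hbound : ∀ p, infDist (j p) t ≤ g p + dist x₀ p := by
    intro p
    suffices g ∈ {h : K →ᵇ ℝ | infDist (j p) t ≤ h p + dist x₀ p} from this
    refine convexHull_min (fun h hh => ?_) ?_ hgt
    · obtain ⟨x, rfl⟩ := hts hh
      calc infDist (j p) t ≤ dist (j p) (j x) := infDist_le_dist_of_mem hh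
        _ = j x p + dist x₀ p := by simp [j, (isometry_kuratowskiMap x₀).dist_eq, dist_comm]
    · intro h₁ h₁_mem h₂ h₂_mem a b ha hb hab
      simp only [mem_ofPred_eq, coe_add, coe_smul, Pi.add_apply, smul_eq_mul] at *
      obtain rfl : b = 1 - a := by linarith
      linarith [mul_le_mul_of_nonneg_left h₁_mem ha, mul_le_mul_of_nonneg_left h₂_mem hb]
  have ht : (t : Set (K →ᵇ ℝ)).Nonempty := convexHull_nonempty_iff.1 ⟨g, hgt⟩
  refine hts <| t.isClosed.closure_subset <| Metric.mem_closure_iff.2 fun ε hε => ?_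
  obtain ⟨_, ⟨p, rfl⟩, hp⟩ := Metric.mem_closure_iff.1 hcl (ε / 2) (half_pos hε)
  have hgp : g p + dist x₀ p ≤ dist g (j p) := by
    simpa [j, Real.dist_eq] using (le_abs_self _).trans (dist_coe_le_dist (f := g) (g := j p) p)
  refine (infDist_lt_iff ht).1 ?_
  calc infDist g t ≤ infDist (j p) t + dist g (j p) := infDist_le_infDist_add_dist
    _ < ε := by linarith [hbound p]

theorem isClosedEmbedding_codRestrict_kuratowskiMap (x₀ : K) :
    IsClosedEmbedding (codRestrict (kuratowskiMap x₀) (convexHull ℝ (range (kuratowskiMap x₀)))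
      fun x => subset_convexHull ℝ _ (mem_range_self x)) := by
  have hiso : Isometry (codRestrict (kuratowskiMap x₀) (convexHull ℝ (range (kuratowskiMap x₀)))
      fun x => subset_convexHull ℝ _ (mem_range_self x)) :=
    .of_dist_eq fun x y => (isometry_kuratowskiMap x₀).dist_eq x y
  refine ⟨hiso.isEmbedding, ?_⟩
  convert isClosed_closure.preimage continuous_subtype_val
  ext v
  refine ⟨?_, fun hv => ?_⟩
  · rintro ⟨x, rfl⟩
    exact subset_closure (mem_range_self x)
  obtain ⟨x, hx⟩ := mem_range_kuratowskiMap_of_mem_closure_of_mem_convexHull x₀ hv v.2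
  exact ⟨x, Subtype.ext hx⟩

end Kuratowski

theorem isMetricANR_iff_exists_retraction {K : Type u} [TopologicalSpace K] :
    IsMetricANR K ↔ MetrizableSpace K ∧
      ∀ (Z : Type u) [TopologicalSpace Z], MetrizableSpace Z →
        ∀ e : K → Z, IsClosedEmbedding e →
          ∃ U : Set Z, IsOpen U ∧ range e ⊆ U ∧
            ∃ ρ : C(U, K), ∀ (k : K) (h : e k ∈ U), ρ ⟨e k, h⟩ = k := by
  refine and_congr_right fun _ => forall_congr' fun Z => forall_congr' fun _ =>
    forall_congr' fun _ => forall_congr' fun e => forall_congr' fun he =>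
    exists_congr fun U => and_congr_right fun _ => and_congr_right fun _ => ⟨?_, ?_⟩
  · rintro ⟨r, hr, hre⟩
    refine ⟨⟨fun u => he.isEmbedding.toHomeomorph.symm ⟨r u, hr u⟩, by fun_prop⟩, fun k h => ?_⟩
    simp [hre]
  · rintro ⟨ρ, hρ⟩
    exact ⟨⟨e ∘ ρ, he.continuous.comp ρ.continuous⟩, fun u => mem_range_self _,
      fun k h => congrArg e (hρ k h)⟩

theorem IsMetricANR.exists_extension {K : Type u} [TopologicalSpace K] (hK : IsMetricANR K)
    {Y : Type*} [TopologicalSpace Y] [MetrizableSpace Y] {A : Set Y} (hA : IsClosed A)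
    {f : Y → K} (hf : ContinuousOn f A) :
    ∃ V : Set Y, IsOpen V ∧ A ⊆ V ∧ ∃ g : C(V, K), ∀ v : V, (v : Y) ∈ A → g v = f v := by
  rcases A.eq_empty_or_nonempty with rfl | ⟨a, ha⟩
  · exact ⟨∅, isOpen_empty, subset_rfl, ⟨(∅ : Set Y).domRestrict f, hf.domRestrict⟩,
      fun _ _ => rfl⟩
  let := metrizableSpaceMetric Y
  have := hK.1
  let := metrizableSpaceMetric K
  set j := kuratowskiMap (f a)
  let j' : K → convexHull ℝ (range j) :=
    codRestrict j _ fun x => subset_convexHull ℝ _ (mem_range_self x)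
  obtain ⟨U, hU, hjU, ρ, hρ⟩ := (isMetricANR_iff_exists_retraction.1 hK).2 _ inferInstance _
    (isClosedEmbedding_codRestrict_kuratowskiMap (f a))
  obtain ⟨F, hF, hFf, hF_hull⟩ := exists_continuous_extension_mem_convexHull hA ⟨a, ha⟩
    ((isometry_kuratowskiMap (f a)).continuous.comp_continuousOn hf)
  have hF_mem : ∀ y, F y ∈ convexHull ℝ (range j) := fun y =>
    convexHull_mono (by rintro _ ⟨y, -, rfl⟩; exact mem_range_self _) (hF_hull y)
  let F' : C(Y, convexHull ℝ (range j)) := ⟨codRestrict F _ hF_mem, hF.codRestrict hF_mem⟩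
  have hF'f : ∀ y ∈ A, F' y = j' (f y) := fun y hy => Subtype.ext (hFf hy)
  refine ⟨F' ⁻¹' U, hU.preimage F'.continuous, fun y hy => ?_, ρ.comp (F'.restrictPreimage U),
    fun v hv => ?_⟩
  · rw [mem_preimage, hF'f y hy]
    exact hjU (mem_range_self _)
  · change ρ ⟨F' v, v.2⟩ = f v
    simp only [hF'f v hv]
    exact hρ (f v) _

theorem isOpen_setOf_forall_prodMk_mem {X T : Type*} [TopologicalSpace X] [TopologicalSpace T]
    [CompactSpace T] {V : Set (X × T)} (hV : IsOpen V) : IsOpen {x | ∀ t, (x, t) ∈ V} := by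
  have : {x | ∀ t, (x, t) ∈ V} = (Prod.fst '' Vᶜ)ᶜ := by ext; simp
  rw [this]
  exact (isClosedMap_fst_of_compactSpace _ hV.isClosed_compl).isOpen_compl

theorem Topology.IsEmbedding.continuousOn_invFun {X Z : Type*} [TopologicalSpace X]
    [TopologicalSpace Z] [Nonempty X] {e : X → Z} (he : IsEmbedding e) :
    ContinuousOn (invFun e) (range e) :=
  he.isInducing.continuousOn_iff.2 <| continuousOn_id.congr fun _ hz => invFun_eq hz

/-- If `K` is a metric ANR and `y₀ ∈ K`, then the path space
`PK = {φ ∈ C([0,1], K) : φ 1 = y₀}`, with the supremum metric (the metric induced from the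
metric on `C([0,1], K)`, which is the sup metric since `[0,1]` is compact), is a metric ANR. -/
theorem pathSpace_isMetricANR {K : Type u} [MetricSpace K] (hK : IsMetricANR K) (y₀ : K) :
    IsMetricANR {φ : C(unitInterval, K) // φ 1 = y₀} := by
  have : Nonempty {φ : C(unitInterval, K) // φ 1 = y₀} := ⟨⟨.const _ y₀, rfl⟩⟩
  refine isMetricANR_iff_exists_retraction.2 ⟨inferInstance, fun Z _ _ e he => ?_⟩
  let f : Z × unitInterval → K := fun p => (invFun e p.1).1 p.2
  have hf : ContinuousOn f (range e ×ˢ univ ∪ univ ×ˢ {1}) := by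
    refine .union_of_isClosed ?_ ?_ (he.isClosed_range.prod isClosed_univ)
      (isClosed_univ.prod isClosed_singleton)
    · exact continuous_eval.comp_continuousOn <|
        (continuous_subtype_val.comp_continuousOn <| he.isEmbedding.continuousOn_invFun.comp
          continuousOn_fst fun p hp => hp.1).prodMk continuousOn_snd
    · refine (continuousOn_const (c := y₀)).congr fun ⟨z, t⟩ ht => ?_
      obtain rfl : t = 1 := ht.2
      exact (invFun e z).2
  obtain ⟨V, hV, hAV, g, hg⟩ := hK.exists_extension
    ((he.isClosed_range.prod isClosed_univ).union (isClosed_univ.prod isClosed_singleton)) hf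
  let U : Set Z := {z | ∀ t, (z, t) ∈ V}
  let G : C(U × unitInterval, K) := g.comp ⟨fun p => ⟨(p.1, p.2), p.1.2 p.2⟩, by fun_prop⟩
  have hG_end : ∀ z, G.curry z 1 = y₀ := fun z =>
    (hg ⟨_, z.2 1⟩ (.inr ⟨trivial, rfl⟩)).trans (invFun e (z : Z)).2
  refine ⟨U, isOpen_setOf_forall_prodMk_mem hV, fun z hz t => hAV (.inl ⟨hz, trivial⟩),
    ⟨fun z => ⟨G.curry z, hG_end z⟩, G.curry.continuous.subtype_mk _⟩, fun φ h => ?_⟩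
  refine Subtype.ext <| ContinuousMap.ext fun t =>
    (hg ⟨_, h t⟩ (.inl ⟨mem_range_self φ, trivial⟩)).trans ?_
  simp [f, leftInverse_invFun he.injective φ]
end
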